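/- arXiv:2409.14849 — 6 statements merged into one kernel-verified Lean document; each statement's English description precedes it below -/
import Mathlib

section
/- For any matching M in a graph G and any assignment OSC of non-negative integers to the vertices such that every edge either has an endpoint labeled 1 or has both endpoints labeled i for some i ≥ 2, we have |M| ≤ n₁ + Σ_{i≥2} ⌊nᵢ/2⌋, where nᵢ is the number of vertices labeled i. -/
open SimpleGraph

/-- `M` is a matching in `G` (as a finite set of edges). -/
def IsMatchingF {V : Type*} (G : SimpleGraph V) (M : Finset (Sym2 V)) : Prop :=
  ↑M ⊆ G.edgeSet ∧ ∀ e ∈ M, ∀ f ∈ M, e ≠ f → ∀ v : V, v ∈ e → v ∉ f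

/-- Odd-set-cover bound: if every edge of `G` has an endpoint labeled `1` or has
both endpoints labeled `i` for some `i ≥ 2`, then
`|M| ≤ n₁ + ∑_{i ≥ 2} ⌊nᵢ/2⌋`, where `nᵢ` is the number of vertices labeled `i`. -/
theorem stmt1 {V : Type*} [Fintype V] [DecidableEq V] (G : SimpleGraph V)
    (M : Finset (Sym2 V)) (hM : IsMatchingF G M) (OSC : V → ℕ)
    (hcover : ∀ u v : V, G.Adj u v →
      OSC u = 1 ∨ OSC v = 1 ∨ (OSC u = OSC v ∧ 2 ≤ OSC u)) :
    M.card ≤ (Finset.univ.filter fun v : V => OSC v = 1).card +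
      ∑ i ∈ (Finset.univ.image OSC).filter (fun i => 2 ≤ i),
        (Finset.univ.filter fun v : V => OSC v = i).card / 2 := by
  classical
  set lab : Sym2 V → ℕ := Sym2.lift ⟨fun a b => max (OSC a) (OSC b), fun a b => max_comm _ _⟩ with hlab
  set M1 := M.filter (fun e => ∃ v ∈ e, OSC v = 1) with hM1
  set M2 := M \ M1 with hM2
  have hM1sub : M1 ⊆ M := Finset.filter_subset _ _
  have hsplit : M.card = M1.card + M2.card := by
    rw [hM2, Finset.card_sdiff_of_subset hM1sub]
    have := Finset.card_le_card hM1sub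
    omega
  -- properties of edges in M2
  have hmem2 : ∀ e ∈ M2, ∀ x ∈ e, OSC x = lab e ∧ 2 ≤ lab e := by
    intro e he
    have heM : e ∈ M := (Finset.mem_sdiff.mp he).1
    have hno : ¬ ∃ v ∈ e, OSC v = 1 := by
      have := (Finset.mem_sdiff.mp he).2
      simpa [hM1, heM] using this
    have hedge : e ∈ G.edgeSet := hM.1 heM
    induction e using Sym2.ind with
    | _ u v =>
      have hadj : G.Adj u v := (SimpleGraph.mem_edgeSet G).mp hedge
      rcases hcover u v hadj with h | h | ⟨heq, hge⟩
      · exact absurd ⟨u, by simp, h⟩ hno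
      · exact absurd ⟨v, by simp, h⟩ hno
      · intro x hx
        have hlabeq : lab s(u, v) = OSC u := by
          simp [hlab, heq]
        rcases Sym2.mem_iff.mp hx with rfl | rfl
        · exact ⟨hlabeq.symm, hlabeq ▸ hge⟩
        · exact ⟨by rw [hlabeq, heq], hlabeq ▸ hge⟩
  -- bound on M1
  have h1 : M1.card ≤ (Finset.univ.filter fun v : V => OSC v = 1).card := by
    apply Finset.card_le_card_of_injOn
      (fun e => if hx : ∃ v ∈ e, OSC v = 1 then hx.choose else (Quot.out e).1)
    · intro e he
      have hx : ∃ v ∈ e, OSC v = 1 := (Finset.mem_filter.mp he).2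
      simp only [dif_pos hx]
      simpa using hx.choose_spec.2
    · intro e he f hf hef
      have hxe : ∃ v ∈ e, OSC v = 1 := (Finset.mem_filter.mp he).2
      have hxf : ∃ v ∈ f, OSC v = 1 := (Finset.mem_filter.mp hf).2
      simp only [dif_pos hxe, dif_pos hxf] at hef
      by_contra hne
      exact hM.2 e (hM1sub he) f (hM1sub hf) hne hxe.choose hxe.choose_spec.1
        (hef ▸ hxf.choose_spec.1)
  -- endpoint finset facts
  have hend : ∀ e ∈ M, (Finset.univ.filter (· ∈ e)).card = 2 := by
    intro e heM
    have hedge : e ∈ G.edgeSet := hM.1 heM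
    induction e using Sym2.ind with
    | _ u v =>
      have hne : u ≠ v := (SimpleGraph.mem_edgeSet G).mp hedge |>.ne
      have : (Finset.univ.filter (· ∈ s(u, v))) = {u, v} := by
        ext x; simp [Sym2.mem_iff]
      rw [this, Finset.card_insert_of_notMem (by simpa using hne), Finset.card_singleton]
  -- fiberwise decomposition of M2
  have h2 : M2.card = ∑ i ∈ (Finset.univ.image OSC).filter (fun i => 2 ≤ i),
      (M2.filter (fun e => lab e = i)).card := by
    apply Finset.card_eq_sum_card_fiberwise
    intro e he
    have hx : (Quot.out e).1 ∈ e := Sym2.out_fst_mem e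
    obtain ⟨hval, hge⟩ := hmem2 e he _ hx
    simp only [Finset.mem_coe, Finset.mem_filter, Finset.mem_image]
    exact ⟨⟨(Quot.out e).1, Finset.mem_univ _, hval⟩, hge⟩
  -- per-class bound
  have h3 : ∀ i ∈ (Finset.univ.image OSC).filter (fun i => 2 ≤ i),
      (M2.filter (fun e => lab e = i)).card ≤
        (Finset.univ.filter fun v : V => OSC v = i).card / 2 := by
    intro i hi
    set S := M2.filter (fun e => lab e = i) with hS
    rw [Nat.le_div_iff_mul_le (by norm_num : 0 < 2)]
    have hdisj : ∀ e ∈ S, ∀ f ∈ S, e ≠ f →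
        Disjoint (Finset.univ.filter (· ∈ e)) (Finset.univ.filter (· ∈ f)) := by
      intro e he f hf hef
      rw [Finset.disjoint_left]
      intro x hxe hxf
      have heM : e ∈ M := (Finset.mem_sdiff.mp (Finset.mem_filter.mp he).1).1
      have hfM : f ∈ M := (Finset.mem_sdiff.mp (Finset.mem_filter.mp hf).1).1
      exact hM.2 e heM f hfM hef x (Finset.mem_filter.mp hxe).2 (Finset.mem_filter.mp hxf).2
    have hbu : (S.biUnion (fun e => Finset.univ.filter (· ∈ e))).card = S.card * 2 := by
      rw [Finset.card_biUnion hdisj]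
      rw [Finset.sum_congr rfl (fun e he => hend e
        (Finset.mem_sdiff.mp (Finset.mem_filter.mp he).1).1)]
      simp [Finset.sum_const, mul_comm, hS, hM2]
    have hsub : S.biUnion (fun e => Finset.univ.filter (· ∈ e)) ⊆
        Finset.univ.filter fun v : V => OSC v = i := by
      intro x hx
      obtain ⟨e, he, hxe⟩ := Finset.mem_biUnion.mp hx
      have he2 : e ∈ M2 := (Finset.mem_filter.mp he).1
      have hlabi : lab e = i := (Finset.mem_filter.mp he).2
      obtain ⟨hval, _⟩ := hmem2 e he2 x (Finset.mem_filter.mp hxe).2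
      simp [hval, hlabi]
    calc S.card * 2 = _ := hbu.symm
      _ ≤ _ := Finset.card_le_card hsub
  calc M.card = M1.card + M2.card := hsplit
    _ ≤ (Finset.univ.filter fun v : V => OSC v = 1).card +
        ∑ i ∈ (Finset.univ.image OSC).filter (fun i => 2 ≤ i),
          (Finset.univ.filter fun v : V => OSC v = i).card / 2 := by
      apply Nat.add_le_add h1
      rw [h2]
      exact Finset.sum_le_sum h3
end

section
/- If M₁ is the set of matching edges incident to a node labeled 1 and, for i ≥ 2, Mᵢ is the set of matching edges with both endpoints labeled i, then under the odd-set-cover condition M = M₁ ∪ ⋃_{i≥2} Mᵢ, |M₁| ≤ n₁, and |Mᵢ| ≤ ⌊nᵢ/2⌋ for each i ≥ 2. -/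
open SimpleGraph

/-- Under the odd-set-cover condition, with `M₁` the matching edges incident to a node
labeled `1` and `Mᵢ` (for `i ≥ 2`) the matching edges with both endpoints labeled `i`:
`M = M₁ ∪ ⋃_{i ≥ 2} Mᵢ`, `|M₁| ≤ n₁` and `|Mᵢ| ≤ ⌊nᵢ/2⌋` for each `i ≥ 2`. -/
theorem stmt2 {V : Type*} [Fintype V] [DecidableEq V] (G : SimpleGraph V)
    (M : Finset (Sym2 V)) (hM : IsMatchingF G M) (OSC : V → ℕ)
    (hcover : ∀ u v : V, G.Adj u v →
      OSC u = 1 ∨ OSC v = 1 ∨ (OSC u = OSC v ∧ 2 ≤ OSC u)) :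
    M = (M.filter fun e => ∃ v : V, v ∈ e ∧ OSC v = 1) ∪
        (((Finset.univ.image OSC).filter (fun i => 2 ≤ i)).biUnion fun i =>
          M.filter fun e => ∀ v : V, v ∈ e → OSC v = i) ∧
    (M.filter fun e => ∃ v : V, v ∈ e ∧ OSC v = 1).card ≤
      (Finset.univ.filter fun v : V => OSC v = 1).card ∧
    ∀ i : ℕ, 2 ≤ i →
      (M.filter fun e => ∀ v : V, v ∈ e → OSC v = i).card ≤
        (Finset.univ.filter fun v : V => OSC v = i).card / 2 := by
  obtain ⟨hMsub, hMdisj⟩ := hM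
  refine ⟨?_, ?_, ?_⟩
  · -- cover
    apply Finset.Subset.antisymm
    · intro e he
      have hedge : e ∈ G.edgeSet := hMsub he
      induction e using Sym2.ind with
      | _ u v =>
        have hadj : G.Adj u v := hedge
        rcases hcover u v hadj with h1 | h1 | ⟨heq, hge⟩
        · exact Finset.mem_union_left _ (Finset.mem_filter.2 ⟨he, u, by simp, h1⟩)
        · exact Finset.mem_union_left _ (Finset.mem_filter.2 ⟨he, v, by simp, h1⟩)
        · refine Finset.mem_union_right _ (Finset.mem_biUnion.2 ⟨OSC u, ?_, ?_⟩)
          · exact Finset.mem_filter.2 ⟨Finset.mem_image.2 ⟨u, Finset.mem_univ u, rfl⟩, hge⟩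
          · refine Finset.mem_filter.2 ⟨he, ?_⟩
            intro w hw
            rw [Sym2.mem_iff] at hw
            rcases hw with rfl | rfl
            · rfl
            · exact heq.symm
    · intro e he
      rcases Finset.mem_union.1 he with h | h
      · exact (Finset.mem_filter.1 h).1
      · obtain ⟨i, _, hi⟩ := Finset.mem_biUnion.1 h
        exact (Finset.mem_filter.1 hi).1
  · -- |M₁| ≤ n₁
    classical
    rcases Finset.eq_empty_or_nonempty (M.filter fun e => ∃ v : V, v ∈ e ∧ OSC v = 1)
      with hemp | ⟨e₀, he₀⟩
    · simp [hemp]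
    haveI : Nonempty V := ⟨(Finset.mem_filter.1 he₀).2.choose⟩
    have hch : ∀ e ∈ M.filter (fun e => ∃ v : V, v ∈ e ∧ OSC v = 1),
        ∃ v : V, v ∈ e ∧ OSC v = 1 := fun e he => (Finset.mem_filter.1 he).2
    apply Finset.card_le_card_of_injOn
      (fun e => if h : ∃ v : V, v ∈ e ∧ OSC v = 1 then h.choose else Classical.arbitrary V)
    · intro e he
      obtain h := (Finset.mem_filter.1 he).2
      simp only [h, dif_pos]
      exact Finset.mem_filter.2 ⟨Finset.mem_univ _, h.choose_spec.2⟩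
    · intro e he f hf hef
      obtain h1 := (Finset.mem_filter.1 he).2
      obtain h2 := (Finset.mem_filter.1 hf).2
      simp only [h1, h2, dif_pos] at hef
      by_contra hne
      exact hMdisj e (Finset.mem_filter.1 he).1 f (Finset.mem_filter.1 hf).1 hne
        h1.choose (h1.choose_spec.1) (hef ▸ h2.choose_spec.1)
  · -- |Mᵢ| ≤ nᵢ/2
    intro i hi
    rw [Nat.le_div_iff_mul_le (by norm_num)]
    set Mi := M.filter (fun e => ∀ v : V, v ∈ e → OSC v = i) with hMi
    have hdisj : (Mi : Set (Sym2 V)).Pairwise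
        (fun e f => Disjoint ((Finset.univ.filter (· ∈ e))) ((Finset.univ.filter (· ∈ f)))) := by
      intro e he f hf hne
      rw [Finset.disjoint_left]
      intro v hv hv'
      exact hMdisj e (Finset.mem_filter.1 he).1 f (Finset.mem_filter.1 hf).1 hne v
        ((Finset.mem_filter.1 hv).2) ((Finset.mem_filter.1 hv').2)
    have hcard : (Mi.biUnion (fun e => Finset.univ.filter (· ∈ e))).card = Mi.card * 2 := by
      rw [Finset.card_biUnion (fun e he f hf hne => hdisj he hf hne)]
      rw [Finset.sum_congr rfl (fun e he => ?_), Finset.sum_const, smul_eq_mul]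
      have hedge : e ∈ G.edgeSet := hMsub (Finset.mem_filter.1 he).1
      induction e using Sym2.ind with
      | _ u v =>
        have hadj : G.Adj u v := hedge
        have : (Finset.univ.filter (· ∈ s(u, v))) = {u, v} := by
          ext w; simp [Sym2.mem_iff]
        rw [this, Finset.card_insert_of_notMem (by simp [hadj.ne]), Finset.card_singleton]
    rw [← hcard]
    apply Finset.card_le_card
    intro v hv
    obtain ⟨e, he, hve⟩ := Finset.mem_biUnion.1 hv
    exact Finset.mem_filter.2 ⟨Finset.mem_univ _,
      (Finset.mem_filter.1 he).2 v ((Finset.mem_filter.1 hve).2)⟩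
end

section
/- In Edmonds-style duals with vertex duals d and non-negative blossom duals z, if all edges are dominated (the reduced weight ŵ(e) = d(u) + d(v) + Σ_{u,v ∈ B} z(B) - w(e) is non-negative for every edge e = uv), then for any augmenting path P and any free (unmatched) vertex f with d(f) equal to the common dual of free vertices, w(P) ≤ 2·d(f). -/
open SimpleGraph

def IsMatching {V : Type*} (G : SimpleGraph V) (M : Set (Sym2 V)) : Prop :=
  M ⊆ G.edgeSet ∧ ∀ e ∈ M, ∀ f ∈ M, e ≠ f → ∀ v : V, v ∈ e → v ∉ f

def Unmatched {V : Type*} (M : Set (Sym2 V)) (v : V) : Prop := ∀ e ∈ M, v ∉ e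

def AltList {V : Type*} (M : Set (Sym2 V)) : Bool → List (Sym2 V) → Prop
  | _, [] => True
  | b, e :: l => (e ∈ M ↔ b = true) ∧ AltList M (!b) l

def IsAugPath {V : Type*} (G : SimpleGraph V) (M : Set (Sym2 V)) {u v : V}
    (p : G.Walk u v) : Prop :=
  u ≠ v ∧ p.IsPath ∧ AltList M false p.edges ∧ AltList M false p.edges.reverse ∧
    Unmatched M u ∧ Unmatched M v

/-- Edge weights: `2` for matching edges, `0` otherwise. -/
noncomputable def edgeWeight {V : Type*} (M : Set (Sym2 V)) (e : Sym2 V) : ℤ :=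
  @ite _ (e ∈ M) (Classical.propDecidable _) 2 0

/-- `w(P) = w(P \ M) - w(P ∩ M)`. -/
noncomputable def pathWeight {V : Type*} (M : Set (Sym2 V)) (l : List (Sym2 V)) : ℤ :=
  (l.map fun e =>
    @ite _ (e ∈ M) (Classical.propDecidable _) (-(edgeWeight M e)) (edgeWeight M e)).sum

/-- The reduced weight `ŵ(uv) = d(u) + d(v) + ∑_{u,v ∈ B} z(B) - w(uv)`. -/
noncomputable def reducedWeight {V : Type*} [DecidableEq V] (M : Set (Sym2 V))
    (d : V → ℤ) (Bl : Finset (Finset V)) (z : Finset V → ℤ) (u v : V) : ℤ :=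
  d u + d v + ∑ B ∈ Bl.filter (fun B => u ∈ B ∧ v ∈ B), z B - edgeWeight M s(u, v)

/-- Number of edges in a list satisfying a predicate. -/
noncomputable def cnt {V : Type*} (P : Sym2 V → Prop) (l : List (Sym2 V)) : ℕ :=
  l.countP fun e => @decide (P e) (Classical.propDecidable _)


def sgn : Bool → ℤ
  | true => -1
  | false => 1

lemma xor_succ (b : Bool) (n : ℕ) :
    (b.xor ((n+1) % 2 == 0)) = ((!b).xor (n % 2 == 0)) := by
  cases b <;> rcases Nat.mod_two_eq_zero_or_one n with h | h <;>
    simp [Nat.add_mod, h]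

lemma cnt_cons {V : Type*} (P : Sym2 V → Prop) (e : Sym2 V) (l : List (Sym2 V)) :
    cnt P (e :: l) = cnt P l + @ite _ (P e) (Classical.propDecidable _) 1 0 := by
  by_cases h : P e <;> simp [cnt, List.countP_cons, h]

lemma lastBool {V : Type*} (M : Set (Sym2 V)) :
    ∀ (l : List (Sym2 V)) (b : Bool) (e : Sym2 V), AltList M b l →
      l.getLast? = some e → (e ∈ M ↔ (b.xor (l.length % 2 == 0)) = true)
  | [], b, e => by simp
  | [a], b, e => by
    intro h he
    simp at he; subst he
    simpa using h.1
  | a :: x :: l, b, e => by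
    intro h he
    have ih := lastBool M (x :: l) (!b) e h.2 (by simpa using he)
    rw [ih]
    rw [show (a :: x :: l).length = (x :: l).length + 1 by simp]
    rw [xor_succ]

noncomputable def bsum {V : Type*} [DecidableEq V] (M : Set (Sym2 V))
    (Bl : Finset (Finset V)) (z : Finset V → ℤ) (l : List (Sym2 V)) : ℤ :=
  ∑ B ∈ Bl, z B * ((cnt (fun e => (∀ x ∈ e, x ∈ B) ∧ e ∉ M) l : ℤ) -
                   (cnt (fun e => (∀ x ∈ e, x ∈ B) ∧ e ∈ M) l : ℤ))

lemma mem_sym2_iff {V : Type*} (u v : V) (B : Finset V) :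
    (∀ x ∈ s(u,v), x ∈ B) ↔ (u ∈ B ∧ v ∈ B) := by
  constructor
  · intro h; exact ⟨h u (by simp), h v (by simp)⟩
  · rintro ⟨h1, h2⟩ x hx
    rcases Sym2.mem_iff.mp hx with rfl | rfl <;> assumption

lemma bsum_nil {V : Type*} [DecidableEq V] (M : Set (Sym2 V))
    (Bl : Finset (Finset V)) (z : Finset V → ℤ) : bsum M Bl z [] = 0 := by
  simp [bsum, cnt]

lemma bsum_cons_mem {V : Type*} [DecidableEq V] (M : Set (Sym2 V))
    (Bl : Finset (Finset V)) (z : Finset V → ℤ) (u v : V) (l : List (Sym2 V))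
    (he : s(u,v) ∈ M) :
    bsum M Bl z (s(u,v) :: l) =
      bsum M Bl z l - ∑ B ∈ Bl.filter (fun B => u ∈ B ∧ v ∈ B), z B := by
  unfold bsum
  rw [Finset.sum_filter, ← Finset.sum_sub_distrib]
  apply Finset.sum_congr rfl
  intro B _
  rw [cnt_cons, cnt_cons]
  have h1 : ¬((∀ x ∈ s(u,v), x ∈ B) ∧ s(u,v) ∉ M) := fun h => h.2 he
  rw [if_neg h1]
  by_cases hB : u ∈ B ∧ v ∈ B
  · rw [if_pos ⟨(mem_sym2_iff u v B).mpr hB, he⟩, if_pos hB]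
    push_cast; ring
  · rw [if_neg (fun h => hB ((mem_sym2_iff u v B).mp h.1)), if_neg hB]
    push_cast; ring

lemma bsum_cons_not_mem {V : Type*} [DecidableEq V] (M : Set (Sym2 V))
    (Bl : Finset (Finset V)) (z : Finset V → ℤ) (u v : V) (l : List (Sym2 V))
    (he : s(u,v) ∉ M) :
    bsum M Bl z (s(u,v) :: l) =
      bsum M Bl z l + ∑ B ∈ Bl.filter (fun B => u ∈ B ∧ v ∈ B), z B := by
  unfold bsum
  rw [Finset.sum_filter, ← Finset.sum_add_distrib]
  apply Finset.sum_congr rfl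
  intro B _
  rw [cnt_cons, cnt_cons]
  have h1 : ¬((∀ x ∈ s(u,v), x ∈ B) ∧ s(u,v) ∈ M) := fun h => he h.2
  rw [if_neg h1]
  by_cases hB : u ∈ B ∧ v ∈ B
  · rw [if_pos ⟨(mem_sym2_iff u v B).mpr hB, he⟩, if_pos hB]
    push_cast; ring
  · rw [if_neg (fun h => hB ((mem_sym2_iff u v B).mp h.1)), if_neg hB]
    push_cast; ring

lemma pathWeight_nil {V : Type*} (M : Set (Sym2 V)) : pathWeight M [] = 0 := rfl

lemma pathWeight_cons {V : Type*} (M : Set (Sym2 V)) (e : Sym2 V) (l : List (Sym2 V)) :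
    pathWeight M (e :: l) =
      @ite _ (e ∈ M) (Classical.propDecidable _) (-(edgeWeight M e)) (edgeWeight M e)
        + pathWeight M l := by
  simp [pathWeight]

lemma key {V : Type*} [DecidableEq V] {G : SimpleGraph V} {M : Set (Sym2 V)} {d : V → ℤ}
    {Bl : Finset (Finset V)} {z : Finset V → ℤ}
    (hdom : ∀ u v : V, G.Adj u v → 0 ≤ reducedWeight M d Bl z u v)
    (htight : ∀ u v : V, G.Adj u v → s(u, v) ∈ M → reducedWeight M d Bl z u v = 0)
    {a b : V} (p : G.Walk a b) : ∀ (b₀ : Bool), AltList M b₀ p.edges →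
      pathWeight M p.edges ≤ sgn b₀ * d a + sgn (b₀.xor (p.length % 2 == 0)) * d b
        + bsum M Bl z p.edges := by
  induction p with
  | nil =>
    intro b₀ _
    cases b₀ <;> simp [pathWeight_nil, bsum_nil, sgn]
  | @cons u c w h q ih =>
    intro b₀ halt
    rw [Walk.edges_cons] at halt ⊢
    obtain ⟨h1, h2⟩ := halt
    rw [pathWeight_cons, Walk.length_cons, xor_succ]
    cases b₀ with
    | true =>
      have he : s(u, c) ∈ M := h1.mpr rfl
      have ht := htight u c h he
      rw [reducedWeight] at ht
      rw [edgeWeight, if_pos he] at ht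
      have hZ : d u + d c + ∑ B ∈ Bl.filter (fun B => u ∈ B ∧ c ∈ B), z B = 2 := by
        linarith
      have hIH := ih false h2
      rw [bsum_cons_mem M Bl z u c q.edges he, if_pos he, edgeWeight, if_pos he]
      simp only [Bool.not_true, Bool.false_xor] at hIH ⊢
      simp only [sgn] at hIH ⊢
      linarith
    | false =>
      have he : s(u, c) ∉ M := fun hm => by simpa using h1.mp hm
      have hd := hdom u c h
      rw [reducedWeight, edgeWeight, if_neg he] at hd
      have hIH := ih true h2
      rw [bsum_cons_not_mem M Bl z u c q.edges he, if_neg he, edgeWeight, if_neg he]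
      simp only [Bool.not_false, Bool.false_xor, Bool.true_xor] at hIH ⊢
      simp only [sgn] at hIH ⊢
      linarith

/-- Dual bound: if all edges are dominated, matching edges tight, blossom duals are
non-negative even duals on odd sets of size ≥ 3, all free vertices share the dual
value `d f`, and each blossom meets the augmenting path `P` in an even-length
alternating subpath, then `w(P) ≤ 2·d(f)`. -/
theorem stmt4 {V : Type*} [Fintype V] [DecidableEq V] (G : SimpleGraph V)
    (M : Set (Sym2 V)) (hM : IsMatching G M)
    (d : V → ℤ) (Bl : Finset (Finset V)) (z : Finset V → ℤ)
    (hz : ∀ B ∈ Bl, 0 ≤ z B ∧ Even (z B) ∧ Odd B.card ∧ 3 ≤ B.card)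
    (hdom : ∀ u v : V, G.Adj u v → 0 ≤ reducedWeight M d Bl z u v)
    (htight : ∀ u v : V, G.Adj u v → s(u, v) ∈ M → reducedWeight M d Bl z u v = 0)
    (f : V) (hf : Unmatched M f)
    (hfree : ∀ g : V, Unmatched M g → d g = d f)
    {a b : V} (p : G.Walk a b) (hp : IsAugPath G M p)
    (hblossom : ∀ B ∈ Bl,
      cnt (fun e => (∀ x ∈ e, x ∈ B) ∧ e ∉ M) p.edges =
      cnt (fun e => (∀ x ∈ e, x ∈ B) ∧ e ∈ M) p.edges) :
    pathWeight M p.edges ≤ 2 * d f := by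
  obtain ⟨hab, hpath, halt, hrev, hua, hub⟩ := hp
  have hlen0 : p.length ≠ 0 := fun h => hab (Walk.eq_of_length_eq_zero h)
  have hne : p.edges ≠ [] := by
    intro h
    apply hlen0
    rw [← p.length_edges, h]
    rfl
  set e := p.edges.getLast hne with hedef
  have he : p.edges.getLast? = some e := List.getLast?_eq_getLast hne
  have hrevhd : p.edges.reverse.head? = some e := by
    rw [List.head?_reverse]; exact he
  have heM : e ∉ M := by
    cases h' : p.edges.reverse with
    | nil => rw [h'] at hrevhd; simp at hrevhd
    | cons x t =>
      rw [h'] at hrevhd hrev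
      simp at hrevhd
      subst hrevhd
      intro hm
      simpa using hrev.1.mp hm
  have hpar := lastBool M p.edges false e halt he
  have hodd : (p.length % 2 == 0) = false := by
    rw [← p.length_edges]
    by_contra h
    exact heM (hpar.mpr (by simp [Bool.not_eq_false] at h; simp [h]))
  have hk := key hdom htight p false halt
  rw [hodd] at hk
  simp only [Bool.xor_false, sgn] at hk
  have hb0 : bsum M Bl z p.edges = 0 :=
    Finset.sum_eq_zero (fun B hB => by rw [hblossom B hB]; ring)
  rw [hb0] at hk
  have hda : d a = d f := hfree a hua
  have hdb : d b = d f := hfree b hub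
  linarith
end

section
/- If M and M* are matchings with |M*| > |M|, then M Δ M* contains at least |M*| - |M| vertex-disjoint augmenting paths with respect to M. -/
open SimpleGraph

def edgesOf {V : Type*} (l : List V) : List (Sym2 V) :=
  (l.zip l.tail).map fun p => s(p.1, p.2)

def IsAugPathL {V : Type*} (G : SimpleGraph V) (M : Set (Sym2 V)) (l : List V) : Prop :=
  2 ≤ l.length ∧ l.Nodup ∧ l.Chain' G.Adj ∧
  AltList M false (edgesOf l) ∧ AltList M false (edgesOf l).reverse ∧
  (∀ v, l.head? = some v → Unmatched M v) ∧
  (∀ v, l.getLast? = some v → Unmatched M v)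

section Helpers

variable {V : Type*} [DecidableEq V]

lemma edgesOf_cons_cons (a b : V) (t : List V) :
    edgesOf (a :: b :: t) = s(a, b) :: edgesOf (b :: t) := rfl

lemma length_edgesOf (l : List V) : (edgesOf l).length = l.length - 1 := by
  cases l with
  | nil => rfl
  | cons a t => simp [edgesOf]

lemma mem_of_mem_edgesOf : ∀ (l : List V) (e : Sym2 V), e ∈ edgesOf l → ∀ u ∈ e, u ∈ l
  | [], e, h => by simp [edgesOf] at h
  | [a], e, h => by simp [edgesOf] at h
  | a :: b :: t, e, h => by
      rw [edgesOf_cons_cons] at h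
      rcases List.mem_cons.mp h with h | h
      · subst h
        intro u hu
        rcases Sym2.mem_iff.mp hu with rfl | rfl <;> simp
      · intro u hu
        have := mem_of_mem_edgesOf (b :: t) e h u hu
        simp only [List.mem_cons] at this ⊢
        tauto

lemma exists_edge_of_mem : ∀ (l : List V), 2 ≤ l.length → ∀ u ∈ l, ∃ e ∈ edgesOf l, u ∈ e
  | a :: b :: t, _, u, hu => by
      rw [edgesOf_cons_cons]
      rcases List.mem_cons.mp hu with rfl | hu
      · exact ⟨s(u, b), by simp, by simp⟩
      rcases List.mem_cons.mp hu with rfl | hu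
      · exact ⟨s(a, u), by simp, by simp⟩
      cases t with
      | nil => simp at hu
      | cons c t' =>
          obtain ⟨e, he, hue⟩ := exists_edge_of_mem (b :: c :: t') (by simp) u
            (by simp only [List.mem_cons] at hu ⊢; tauto)
          exact ⟨e, by simp [he], hue⟩

lemma edgesOf_nodup : ∀ (l : List V), l.Nodup → (edgesOf l).Nodup
  | [], _ => by simp [edgesOf]
  | [a], _ => by simp [edgesOf]
  | a :: b :: t, h => by
      rw [edgesOf_cons_cons]
      refine List.nodup_cons.mpr ⟨fun hmem => ?_, edgesOf_nodup (b :: t) (List.nodup_cons.mp h).2⟩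
      have := mem_of_mem_edgesOf (b :: t) _ hmem a (by simp)
      exact (List.nodup_cons.mp h).1 this

lemma altList_congr {M N : Set (Sym2 V)} : ∀ (L : List (Sym2 V)) (b : Bool),
    (∀ e ∈ L, e ∈ M ↔ e ∈ N) → AltList M b L → AltList N b L
  | [], b, _, _ => trivial
  | e :: L, b, h, ha => by
      refine ⟨(h e (by simp)).symm.trans ha.1, ?_⟩
      exact altList_congr L (!b) (fun f hf => h f (by simp [hf])) ha.2

lemma altList_append {M : Set (Sym2 V)} : ∀ (L₁ L₂ : List (Sym2 V)) (b c : Bool),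
    AltList M b L₁ → AltList M c L₂ → (c = if Even L₁.length then b else !b) →
    AltList M b (L₁ ++ L₂)
  | [], L₂, b, c, _, h₂, hc => by simp only [List.length_nil, Even.zero, if_true] at hc; subst hc; simpa using h₂
  | e :: L₁, L₂, b, c, h₁, h₂, hc => by
      refine ⟨h₁.1, altList_append L₁ L₂ (!b) c h₁.2 h₂ ?_⟩
      rw [hc]
      by_cases h : Even L₁.length
      · rw [if_pos h, if_neg (by simp [Nat.even_add_one, h])]
      · rw [if_neg h, if_pos (by simp [Nat.even_add_one, h]), Bool.not_not]

lemma altList_reverse {M : Set (Sym2 V)} : ∀ (L : List (Sym2 V)) (b : Bool),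
    AltList M b L → AltList M (if Even L.length then !b else b) L.reverse
  | [], b, _ => trivial
  | e :: L, b, h => by
      have ih := altList_reverse L (!b) h.2
      rw [List.reverse_cons]
      by_cases hE : Even L.length
      · rw [if_neg (by simp [Nat.even_add_one, hE])]
        exact altList_append L.reverse [e] b b (by simpa [hE, Bool.not_not] using ih)
          ⟨h.1, trivial⟩ (by simp [hE])
      · rw [if_pos (by simp [Nat.even_add_one, hE])]
        exact altList_append L.reverse [e] (!b) b (by simpa [hE] using ih)
          ⟨h.1, trivial⟩ (by simp [hE, Bool.not_not])

lemma altList_count (A B : Finset (Sym2 V)) (hAB : Disjoint A B) :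
    ∀ (L : List (Sym2 V)), AltList (↑A) false L → L.Nodup → (∀ e ∈ L, e ∈ A ∪ B) →
    (A ∩ L.toFinset).card = L.length / 2 ∧ (B ∩ L.toFinset).card = (L.length + 1) / 2
  | [] => by simp
  | [e] => by
      intro hA hnd hmem
      have heA : e ∉ A := by simpa using hA.1
      have heB : e ∈ B := by have := hmem e (by simp); rw [Finset.mem_union] at this; tauto
      have hef : ([e] : List (Sym2 V)).toFinset = {e} := by simp
      rw [hef, Finset.inter_singleton_of_notMem heA, Finset.inter_singleton_of_mem heB]
      simp
  | e :: f :: L => by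
      intro hA hnd hmem
      have heA : e ∉ A := by simpa using hA.1
      have heB : e ∈ B := by have := hmem e (by simp); rw [Finset.mem_union] at this; tauto
      have hfA : f ∈ A := by simpa using hA.2.1
      have hfB : f ∉ B := Finset.disjoint_left.mp hAB hfA
      have hrec := altList_count A B hAB L hA.2.2 hnd.of_cons.of_cons
        (fun x hx => hmem x (by simp [hx]))
      have hfL : f ∉ L := by
        have := List.nodup_cons.mp (List.nodup_cons.mp hnd).2
        exact fun h => this.1 h
      have heL : e ∉ L := by
        have := (List.nodup_cons.mp hnd).1
        exact fun h => this (by simp [h])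
      have hAeq : A ∩ (e :: f :: L).toFinset = insert f (A ∩ L.toFinset) := by
        ext x
        simp only [Finset.mem_inter, List.mem_toFinset, List.mem_cons, Finset.mem_insert]
        constructor
        · rintro ⟨hx, rfl | rfl | hx2⟩
          · exact absurd hx heA
          · exact Or.inl rfl
          · exact Or.inr ⟨hx, hx2⟩
        · rintro (rfl | ⟨h1, h2⟩)
          · exact ⟨hfA, Or.inr (Or.inl rfl)⟩
          · exact ⟨h1, Or.inr (Or.inr h2)⟩
      have hBeq : B ∩ (e :: f :: L).toFinset = insert e (B ∩ L.toFinset) := by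
        ext x
        simp only [Finset.mem_inter, List.mem_toFinset, List.mem_cons, Finset.mem_insert]
        constructor
        · rintro ⟨hx, rfl | rfl | hx2⟩
          · exact Or.inl rfl
          · exact absurd hx hfB
          · exact Or.inr ⟨hx, hx2⟩
        · rintro (rfl | ⟨h1, h2⟩)
          · exact ⟨heB, Or.inl rfl⟩
          · exact ⟨h1, Or.inr (Or.inr h2)⟩
      constructor
      · rw [hAeq, Finset.card_insert_of_notMem (by simp [hfL]), hrec.1]
        simp only [List.length_cons]; omega
      · rw [hBeq, Finset.card_insert_of_notMem (by simp [heL]), hrec.2]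
        simp only [List.length_cons]; omega

lemma last_mem_lastEdge : ∀ (l : List V), 2 ≤ l.length → ∀ x, l.getLast? = some x →
    ∃ e, (edgesOf l).getLast? = some e ∧ x ∈ e
  | [a, b], _, x, hx => by
      have hxb : x = b := by simpa using hx.symm
      subst hxb
      exact ⟨s(a, x), rfl, by simp⟩
  | a :: b :: c :: t, _, x, hx => by
      rw [List.getLast?_cons_cons] at hx
      obtain ⟨e, he, hxe⟩ := last_mem_lastEdge (b :: c :: t) (by simp) x hx
      refine ⟨e, ?_, hxe⟩
      rw [edgesOf_cons_cons, edgesOf_cons_cons, List.getLast?_cons_cons, ← edgesOf_cons_cons]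
      exact he

end Helpers

section Extract

set_option linter.unusedSectionVars false

variable {V : Type*} [DecidableEq V]

/-- pairwise disjointness of edges (matching property) -/
def PW (A : Finset (Sym2 V)) : Prop :=
  ∀ e ∈ A, ∀ f ∈ A, e ≠ f → ∀ v : V, v ∈ e → v ∉ f

lemma pw_eq {A : Finset (Sym2 V)} (hA : PW A) {e f : Sym2 V} (he : e ∈ A) (hf : f ∈ A)
    {v : V} (hve : v ∈ e) (hvf : v ∈ f) : e = f := by
  by_contra h
  exact hA e he f hf h v hve hvf

lemma extract (G : SimpleGraph V) :
    ∀ (n : ℕ) (A B : Finset (Sym2 V)), B.card ≤ n →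
    PW A → PW B → (↑A : Set (Sym2 V)) ⊆ G.edgeSet → (↑B : Set (Sym2 V)) ⊆ G.edgeSet →
    Disjoint A B →
    ∀ v w : V, s(v, w) ∈ B → Unmatched (↑A) v →
    ∃ l : List V, l.head? = some v ∧ 2 ≤ l.length ∧ l.Nodup ∧ l.Chain' G.Adj ∧
      AltList (↑A) false (edgesOf l) ∧ (∀ e ∈ edgesOf l, e ∈ A ∪ B) ∧
      (∀ e ∈ A ∪ B, ∀ u ∈ e, u ∈ l → e ∈ edgesOf l) ∧
      (((∀ z, l.getLast? = some z → Unmatched (↑A) z) ∧ Odd (edgesOf l).length) ∨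
       ((∀ z, l.getLast? = some z → Unmatched (↑B) z) ∧ Even (edgesOf l).length)) := by
  intro n
  induction n with
  | zero =>
      intro A B hn _ _ _ _ _ v w hvw _
      have : B.Nonempty := ⟨_, hvw⟩
      have := Finset.card_pos.mpr this
      omega
  | succ n ih =>
      intro A B hn hA hB hAG hBG hAB v w hvw hv
      have hvwG : s(v, w) ∈ G.edgeSet := hBG hvw
      have hvne : v ≠ w := by
        intro h
        exact G.not_isDiag_of_mem_edgeSet hvwG (Sym2.mk_isDiag_iff.mpr h)
      have hvwA : s(v, w) ∉ A := fun h => (Finset.disjoint_left.mp hAB h) hvw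
      by_cases hwA : ∃ e ∈ A, w ∈ e
      · -- w is matched by A, get its A-partner x
        obtain ⟨e, heA, hwe⟩ := hwA
        obtain ⟨x, rfl⟩ := Sym2.mem_iff_exists.mp hwe
        have hwxG : s(w, x) ∈ G.edgeSet := hAG heA
        have hwxne : w ≠ x := fun h => G.not_isDiag_of_mem_edgeSet hwxG (Sym2.mk_isDiag_iff.mpr h)
        have hxv : x ≠ v := by
          rintro rfl
          exact hv _ (by exact_mod_cast heA) (by simp)
        by_cases hxB : ∃ f ∈ B, x ∈ f
        · -- x has a B-partner y : recurse
          obtain ⟨f, hfB, hxf⟩ := hxB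
          obtain ⟨y, rfl⟩ := Sym2.mem_iff_exists.mp hxf
          have hfne : s(x, y) ≠ s(v, w) := by
            intro h
            have : x ∈ s(v, w) := h ▸ (by simp : x ∈ s(x, y))
            rcases Sym2.mem_iff.mp this with h' | h'
            · exact hxv h'
            · exact hwxne h'.symm
          set A' := A.erase s(w, x) with hA'def
          set B' := B.erase s(v, w) with hB'def
          have hA'sub : A' ⊆ A := Finset.erase_subset _ _
          have hB'sub : B' ⊆ B := Finset.erase_subset _ _
          have hxyB' : s(x, y) ∈ B' := Finset.mem_erase.mpr ⟨hfne, hfB⟩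
          have hxA' : Unmatched (↑A') x := by
            intro g hg hxg
            have hgA : g ∈ A := hA'sub hg
            have : g = s(w, x) := pw_eq hA hgA heA hxg (by simp)
            rw [hA'def] at hg
            exact (Finset.mem_erase.mp hg).1 this
          have hcard : B'.card ≤ n := by
            rw [hB'def, Finset.card_erase_of_mem hvw]; omega
          obtain ⟨l', hl'h, hl'len, hl'nd, hl'ch, hl'alt, hl'mem, hl'comp, hl'last⟩ :=
            ih A' B' hcard (fun e he f hf => hA e (hA'sub he) f (hA'sub hf))
              (fun e he f hf => hB e (hB'sub he) f (hB'sub hf))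
              (fun e he => hAG (hA'sub he)) (fun e he => hBG (hB'sub he))
              (Finset.disjoint_of_subset_left hA'sub
                (Finset.disjoint_of_subset_right hB'sub hAB))
              x y hxyB' hxA'
          -- destructure l'
          match l', hl'h, hl'len with
          | x' :: r, hl'h, hl'len =>
          have hx' : x = x' := by simpa using hl'h.symm
          subst hx'
          -- key : v ∉ l', w ∉ l'
          have hvl' : v ∉ x :: r := by
            intro hvmem
            obtain ⟨e, hee, hve⟩ := exists_edge_of_mem (x :: r) hl'len v hvmem
            rcases Finset.mem_union.mp (hl'mem e hee) with h | h
            · exact hv _ (by exact_mod_cast hA'sub h) hve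
            · have : e = s(v, w) := pw_eq hB (hB'sub h) hvw hve (by simp)
              exact (Finset.mem_erase.mp h).1 this
          have hwl' : w ∉ x :: r := by
            intro hwmem
            obtain ⟨e, hee, hwe'⟩ := exists_edge_of_mem (x :: r) hl'len w hwmem
            rcases Finset.mem_union.mp (hl'mem e hee) with h | h
            · have : e = s(w, x) := pw_eq hA (hA'sub h) heA hwe' (by simp)
              exact (Finset.mem_erase.mp h).1 this
            · have : e = s(v, w) := pw_eq hB (hB'sub h) hvw hwe' (by simp)
              exact (Finset.mem_erase.mp h).1 this
          refine ⟨v :: w :: x :: r, rfl, by simp, ?_, ?_, ?_, ?_, ?_, ?_⟩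
          · -- Nodup
            refine List.nodup_cons.mpr ⟨?_, List.nodup_cons.mpr ⟨hwl', hl'nd⟩⟩
            simp only [List.mem_cons, not_or]
            exact ⟨hvne, fun h => hvl' (by simp [h]), fun h => hvl' (by simp [h])⟩
          · -- Chain'
            show List.IsChain G.Adj _; rw [List.isChain_cons_cons, List.isChain_cons_cons]
            exact ⟨(SimpleGraph.mem_edgeSet G).mp hvwG,
              (SimpleGraph.mem_edgeSet G).mp hwxG, hl'ch⟩
          · -- AltList
            rw [edgesOf_cons_cons, edgesOf_cons_cons]
            refine ⟨by simpa using hvwA, by simpa using heA, ?_⟩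
            show AltList (↑A) false (edgesOf (x :: r))
            refine altList_congr _ _ (fun e hee => ?_) hl'alt
            simp only [Finset.mem_coe]
            constructor
            · exact fun h => hA'sub h
            · intro heAmem
              rcases Finset.mem_union.mp (hl'mem e hee) with h | h
              · exact h
              · exact absurd (hB'sub h) (Finset.disjoint_left.mp hAB heAmem)
          · -- edges ⊆ A ∪ B
            intro e hee
            rw [edgesOf_cons_cons, edgesOf_cons_cons] at hee
            rcases List.mem_cons.mp hee with rfl | hee
            · exact Finset.mem_union.mpr (Or.inr hvw)
            rcases List.mem_cons.mp hee with rfl | hee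
            · exact Finset.mem_union.mpr (Or.inl heA)
            rcases Finset.mem_union.mp (hl'mem e hee) with h | h
            · exact Finset.mem_union.mpr (Or.inl (hA'sub h))
            · exact Finset.mem_union.mpr (Or.inr (hB'sub h))
          · -- component
            intro e he u hu hul
            rw [edgesOf_cons_cons, edgesOf_cons_cons]
            rcases List.mem_cons.mp hul with hue | hul
            · rw [hue] at hu
              rcases Finset.mem_union.mp he with h | h
              · exact absurd hu (hv _ (by exact_mod_cast h))
              · have : e = s(v, w) := pw_eq hB h hvw hu (by simp)
                simp [this]
            rcases List.mem_cons.mp hul with hue | hul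
            · rw [hue] at hu
              rcases Finset.mem_union.mp he with h | h
              · have : e = s(w, x) := pw_eq hA h heA hu (by simp)
                simp [this]
              · have : e = s(v, w) := pw_eq hB h hvw hu (by simp)
                simp [this]
            · -- u ∈ x :: r
              by_cases heA' : e ∈ A' ∪ B'
              · have := hl'comp e heA' u hu hul
                simp [this]
              · -- e ∈ (A∪B) \ (A'∪B') : e = s(w,x) or e = s(v,w)
                rcases Finset.mem_union.mp he with h | h
                · by_cases hew : e = s(w, x)
                  · simp [hew]
                  · exact absurd (Finset.mem_union.mpr
                      (Or.inl (Finset.mem_erase.mpr ⟨hew, h⟩))) heA'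
                · by_cases hev : e = s(v, w)
                  · simp [hev]
                  · exact absurd (Finset.mem_union.mpr
                      (Or.inr (Finset.mem_erase.mpr ⟨hev, h⟩))) heA'
          · -- final disjunction
            have hlast : (v :: w :: x :: r).getLast? = (x :: r).getLast? := by
              rw [List.getLast?_cons_cons, List.getLast?_cons_cons]
            have hlen : (edgesOf (v :: w :: x :: r)).length = (edgesOf (x :: r)).length + 2 := by
              rw [edgesOf_cons_cons, edgesOf_cons_cons]; simp
            have hzx : ∀ z, (x :: r).getLast? = some z → z ≠ x := by
              intro z hz h
              subst h
              match r, hl'len, hl'nd with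
              | c :: r', _, hnd =>
                rw [List.getLast?_cons_cons] at hz
                have : z ∈ c :: r' := List.mem_of_getLast? hz
                exact (List.nodup_cons.mp hnd).1 this
            rcases hl'last with ⟨hun, hodd⟩ | ⟨hun, heven⟩
            · left
              refine ⟨?_, by rw [hlen]; rcases hodd with ⟨k, hk⟩; exact ⟨k + 1, by omega⟩⟩
              intro z hz g hg hzg
              rw [hlast] at hz
              have hzl' : z ∈ x :: r := List.mem_of_getLast? hz
              by_cases hgA' : g ∈ (↑A' : Set (Sym2 V))
              · exact hun z hz g hgA' hzg
              · have hgA : g ∈ A := by exact_mod_cast hg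
                have : g = s(w, x) := by
                  by_contra hne
                  exact hgA' (by exact_mod_cast Finset.mem_erase.mpr ⟨hne, hgA⟩)
                subst this
                rcases Sym2.mem_iff.mp hzg with rfl | rfl
                · exact hwl' hzl'
                · exact hzx z hz rfl
            · right
              refine ⟨?_, by rw [hlen]; rcases heven with ⟨k, hk⟩; exact ⟨k + 1, by omega⟩⟩
              intro z hz g hg hzg
              rw [hlast] at hz
              have hzl' : z ∈ x :: r := List.mem_of_getLast? hz
              by_cases hgB' : g ∈ (↑B' : Set (Sym2 V))
              · exact hun z hz g hgB' hzg
              · have hgB : g ∈ B := by exact_mod_cast hg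
                have : g = s(v, w) := by
                  by_contra hne
                  exact hgB' (by exact_mod_cast Finset.mem_erase.mpr ⟨hne, hgB⟩)
                subst this
                rcases Sym2.mem_iff.mp hzg with rfl | rfl
                · exact hvl' hzl'
                · exact hwl' hzl'
        · -- x has no B-partner : l = [v, w, x]
          have hxvne : v ≠ x := fun h => hxv h.symm
          refine ⟨[v, w, x], rfl, by simp, by simp [hvne, hwxne, hxvne], ?_, ?_, ?_, ?_, ?_⟩
          · show List.IsChain G.Adj _; rw [List.isChain_cons_cons]
            exact ⟨(SimpleGraph.mem_edgeSet G).mp hvwG,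
              List.isChain_pair.mpr ((SimpleGraph.mem_edgeSet G).mp hwxG)⟩
          · exact ⟨by simpa using hvwA, by simpa using heA, trivial⟩
          · intro e he
            rcases List.mem_cons.mp he with rfl | he
            · exact Finset.mem_union.mpr (Or.inr hvw)
            rcases List.mem_cons.mp he with rfl | he
            · exact Finset.mem_union.mpr (Or.inl heA)
            · simp [edgesOf] at he
          · intro e he u hu hul
            rcases List.mem_cons.mp hul with hue | hul
            · rw [hue] at hu
              rcases Finset.mem_union.mp he with h | h
              · exact absurd hu (hv _ (by exact_mod_cast h))
              · have : e = s(v, w) := pw_eq hB h hvw hu (by simp)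
                simp [edgesOf, this]
            rcases List.mem_cons.mp hul with hue | hul
            · rw [hue] at hu
              rcases Finset.mem_union.mp he with h | h
              · have : e = s(w, x) := pw_eq hA h heA hu (by simp)
                simp [edgesOf, this]
              · have : e = s(v, w) := pw_eq hB h hvw hu (by simp)
                simp [edgesOf, this]
            rcases List.mem_cons.mp hul with hue | hul
            · rw [hue] at hu
              rcases Finset.mem_union.mp he with h | h
              · have : e = s(w, x) := pw_eq hA h heA hu (by simp)
                simp [edgesOf, this]
              · exact absurd ⟨e, h, hu⟩ hxB
            · simp at hul
          · right
            refine ⟨?_, by simp [edgesOf]⟩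
            intro z hz g hg hzg
            have : z = x := by simpa using hz.symm
            subst this
            exact hxB ⟨g, by exact_mod_cast hg, hzg⟩
      · -- w has no A-partner : l = [v, w] is augmenting
        refine ⟨[v, w], rfl, by simp, by simp [hvne], ?_, ?_, ?_, ?_, ?_⟩
        · exact List.isChain_pair.mpr ((SimpleGraph.mem_edgeSet G).mp hvwG)
        · exact ⟨by simpa using hvwA, trivial⟩
        · intro e he
          rcases List.mem_cons.mp he with rfl | he
          · exact Finset.mem_union.mpr (Or.inr hvw)
          · simp [edgesOf] at he
        · intro e he u hu hul
          rcases List.mem_cons.mp hul with hue | hul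
          · rw [hue] at hu
            rcases Finset.mem_union.mp he with h | h
            · exact absurd hu (hv _ (by exact_mod_cast h))
            · have : e = s(v, w) := pw_eq hB h hvw hu (by simp)
              simp [edgesOf, this]
          rcases List.mem_cons.mp hul with hue | hul
          · rw [hue] at hu
            rcases Finset.mem_union.mp he with h | h
            · exact absurd ⟨e, h, hu⟩ hwA
            · have : e = s(v, w) := pw_eq hB h hvw hu (by simp)
              simp [edgesOf, this]
          · simp at hul
        · left
          refine ⟨?_, by simp [edgesOf]⟩
          intro z hz g hg hzg
          have : z = w := by simpa using hz.symm
          subst this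
          exact hwA ⟨g, by exact_mod_cast hg, hzg⟩

end Extract

section Outer

set_option linter.unusedSectionVars false

variable {V : Type*} [DecidableEq V] [Fintype V]

lemma card_cover (S : Finset (Sym2 V)) (hS : PW S) (hD : ∀ e ∈ S, ¬ e.IsDiag) :
    (S.biUnion (fun e => Finset.univ.filter (· ∈ e))).card = 2 * S.card := by
  have hdisj : ∀ e ∈ S, ∀ f ∈ S, e ≠ f →
      Disjoint (Finset.univ.filter (· ∈ e)) (Finset.univ.filter (· ∈ f)) := by
    intro e he f hf hef
    rw [Finset.disjoint_left]
    intro u hu hu'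
    simp only [Finset.mem_filter] at hu hu'
    exact hS e he f hf hef u hu.2 hu'.2
  rw [Finset.card_biUnion hdisj]
  have hcards : ∀ e ∈ S, (Finset.univ.filter (· ∈ e)).card = 2 := by
    intro e he
    induction e with
    | _ a b =>
      have hab : a ≠ b := fun h => hD _ he (Sym2.mk_isDiag_iff.mpr h)
      rw [show Finset.univ.filter (· ∈ s(a, b)) = {a, b} from by ext u; simp [Sym2.mem_iff]]
      exact Finset.card_pair hab
  rw [Finset.sum_congr rfl hcards, Finset.sum_const, smul_eq_mul, mul_comm]

lemma berge_aux (G : SimpleGraph V) :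
    ∀ (n : ℕ) (A B : Finset (Sym2 V)), B.card ≤ n →
    PW A → PW B → (↑A : Set (Sym2 V)) ⊆ G.edgeSet → (↑B : Set (Sym2 V)) ⊆ G.edgeSet →
    Disjoint A B →
    ∃ P : Finset (List V),
      B.card - A.card ≤ P.card ∧
      (∀ l ∈ P, 2 ≤ l.length ∧ l.Nodup ∧ l.Chain' G.Adj ∧
        AltList (↑A) false (edgesOf l) ∧ AltList (↑A) false (edgesOf l).reverse ∧
        (∀ x, l.head? = some x → Unmatched (↑A) x) ∧
        (∀ x, l.getLast? = some x → Unmatched (↑A) x) ∧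
        (∀ e ∈ edgesOf l, e ∈ A ∪ B)) ∧
      (∀ l ∈ P, ∀ l' ∈ P, l ≠ l' → ∀ v : V, v ∈ l → v ∉ l') := by
  intro n
  induction n with
  | zero =>
      intro A B hn _ _ _ _ _
      refine ⟨∅, ?_, by simp, by simp⟩
      simp only [Finset.card_empty]
      omega
  | succ n ih =>
      intro A B hn hA hB hAG hBG hAB
      by_cases hle : B.card ≤ A.card
      · refine ⟨∅, ?_, by simp, by simp⟩
        simp only [Finset.card_empty]
        omega
      push_neg at hle
      -- find a vertex covered by B but not by A
      have hcovB := card_cover B hB (fun e he => G.not_isDiag_of_mem_edgeSet (hBG he))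
      have hcovA := card_cover A hA (fun e he => G.not_isDiag_of_mem_edgeSet (hAG he))
      obtain ⟨v, hvB, hvA⟩ : ∃ v, v ∈ B.biUnion (fun e => Finset.univ.filter (· ∈ e)) ∧
          v ∉ A.biUnion (fun e => Finset.univ.filter (· ∈ e)) := by
        by_contra hc
        push_neg at hc
        have hsub : B.biUnion (fun e => Finset.univ.filter (· ∈ e)) ⊆
            A.biUnion (fun e => Finset.univ.filter (· ∈ e)) := fun u hu => hc u hu
        have := Finset.card_le_card hsub
        omega
      have hv : Unmatched (↑A) v := by
        intro e he hve
        exact hvA (Finset.mem_biUnion.mpr ⟨e, by exact_mod_cast he, by simp [hve]⟩)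
      obtain ⟨f, hfB, hvf⟩ := Finset.mem_biUnion.mp hvB
      have hvf' : v ∈ f := by simpa using hvf
      obtain ⟨w, rfl⟩ := Sym2.mem_iff_exists.mp hvf'
      obtain ⟨l, hlh, hllen, hlnd, hlch, hlalt, hlmem, hlcomp, hlcase⟩ :=
        extract G B.card A B le_rfl hA hB hAG hBG hAB v w hfB hv
      -- common setup
      set EF := (edgesOf l).toFinset with hEFdef
      set A' := A \ EF with hA'def
      set B' := B \ EF with hB'def
      have hmemA' : ∀ e, e ∈ A' ↔ e ∈ A ∧ e ∉ EF := by
        intro e; rw [hA'def, Finset.mem_sdiff]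
      have hmemB' : ∀ e, e ∈ B' ↔ e ∈ B ∧ e ∉ EF := by
        intro e; rw [hB'def, Finset.mem_sdiff]
      have hmemEF : ∀ e, e ∈ EF ↔ e ∈ edgesOf l := by
        intro e; rw [hEFdef, List.mem_toFinset]
      have hA'sub : A' ⊆ A := fun e he => ((hmemA' e).mp he).1
      have hB'sub : B' ⊆ B := fun e he => ((hmemB' e).mp he).1
      have hcount := altList_count A B hAB (edgesOf l) hlalt (edgesOf_nodup l hlnd) hlmem
      have e1 : A'.card + (A ∩ EF).card = A.card := by
        rw [hA'def]; exact Finset.card_sdiff_add_card_inter A EF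
      have e2 : B'.card + (B ∩ EF).card = B.card := by
        rw [hB'def]; exact Finset.card_sdiff_add_card_inter B EF
      have e3 : (A ∩ EF).card = (edgesOf l).length / 2 := hcount.1
      have e4 : (B ∩ EF).card = ((edgesOf l).length + 1) / 2 := hcount.2
      clear_value A' B' EF
      have hlenpos : 1 ≤ (edgesOf l).length := by
        rw [length_edgesOf]; omega
      have hB'lt : B'.card ≤ n := by omega
      -- key disjointness fact: vertices touched by A' ∪ B' avoid l
      have H1 : ∀ e ∈ A' ∪ B', ∀ u ∈ e, u ∉ l := by
        intro e he u hu hul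
        have heAB : e ∈ A ∪ B := Finset.union_subset_union hA'sub hB'sub he
        have heEF : e ∈ EF := (hmemEF e).mpr (hlcomp e heAB u hu hul)
        rcases Finset.mem_union.mp he with h | h
        · exact ((hmemA' e).mp h).2 heEF
        · exact ((hmemB' e).mp h).2 heEF
      obtain ⟨P', hP'card, hP'prop, hP'disj⟩ :=
        ih A' B' hB'lt (fun e he f hf => hA e (hA'sub he) f (hA'sub hf))
          (fun e he f hf => hB e (hB'sub he) f (hB'sub hf))
          (fun e he => hAG (hA'sub he)) (fun e he => hBG (hB'sub he))
          (Finset.disjoint_of_subset_left hA'sub (Finset.disjoint_of_subset_right hB'sub hAB))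
      -- vertices of any l' ∈ P' avoid l
      have H2 : ∀ l' ∈ P', ∀ u, u ∈ l' → u ∉ l := by
        intro l' hl' u hu
        obtain ⟨hlen2, _, _, _, _, _, _, hmem'⟩ := hP'prop l' hl'
        obtain ⟨e, hee, hue⟩ := exists_edge_of_mem l' hlen2 u hu
        exact H1 e (hmem' e hee) u hue
      -- upgrade each member of P' from (A', B') to (A, B)
      have Hup : ∀ l' ∈ P', 2 ≤ l'.length ∧ l'.Nodup ∧ l'.Chain' G.Adj ∧
          AltList (↑A) false (edgesOf l') ∧ AltList (↑A) false (edgesOf l').reverse ∧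
          (∀ x, l'.head? = some x → Unmatched (↑A) x) ∧
          (∀ x, l'.getLast? = some x → Unmatched (↑A) x) ∧
          (∀ e ∈ edgesOf l', e ∈ A ∪ B) := by
        intro l' hl'
        obtain ⟨hlen2, hnd', hch', halt', haltr', hhead', hlast', hmem'⟩ := hP'prop l' hl'
        have hcongr : ∀ e ∈ edgesOf l', (e ∈ (↑A' : Set (Sym2 V)) ↔ e ∈ (↑A : Set (Sym2 V))) := by
          intro e hee
          simp only [Finset.mem_coe]
          constructor
          · exact fun h => hA'sub h
          · intro heA
            rcases Finset.mem_union.mp (hmem' e hee) with h | h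
            · exact h
            · exact absurd (hB'sub h) (Finset.disjoint_left.mp hAB heA)
        have hunm : ∀ x, x ∈ l' → Unmatched (↑A') x → Unmatched (↑A) x := by
          intro x hx hUx e he hxe
          have heA : e ∈ A := by exact_mod_cast he
          by_cases h : e ∈ A'
          · exact hUx e (by exact_mod_cast h) hxe
          · have heEF : e ∈ EF := by
              by_contra hEF
              exact h ((hmemA' e).mpr ⟨heA, hEF⟩)
            have : x ∈ l := mem_of_mem_edgesOf l e ((hmemEF e).mp heEF) x hxe
            exact H2 l' hl' x hx this
        refine ⟨hlen2, hnd', hch', altList_congr _ _ hcongr halt',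
          altList_congr _ _ (fun e hee => hcongr e (List.mem_reverse.mp hee)) haltr',
          fun x hx => hunm x (List.mem_of_mem_head? (hx ▸ rfl : x ∈ l'.head?)) (hhead' x hx),
          fun x hx => hunm x (List.mem_of_getLast? hx) (hlast' x hx),
          fun e hee => Finset.union_subset_union hA'sub hB'sub (hmem' e hee)⟩
      rcases hlcase with ⟨hunl, hodd⟩ | ⟨hunl, heven⟩
      · -- augmenting case: insert l
        have hlP' : l ∉ P' := by
          intro hmem
          obtain ⟨e, hee, hve⟩ := exists_edge_of_mem l hllen v
            (List.mem_of_mem_head? (hlh ▸ rfl : v ∈ l.head?))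
          exact H1 e ((hP'prop l hmem).2.2.2.2.2.2.2 e hee) v hve
            (List.mem_of_mem_head? (hlh ▸ rfl : v ∈ l.head?))
        refine ⟨insert l P', ?_, ?_, ?_⟩
        · rw [Finset.card_insert_of_notMem hlP']
          obtain ⟨k, hk⟩ := hodd
          omega
        · intro l₀ hl₀
          rcases Finset.mem_insert.mp hl₀ with rfl | hl₀
          · refine ⟨hllen, hlnd, hlch, hlalt, ?_, ?_, hunl, hlmem⟩
            · have := altList_reverse _ false hlalt
              rwa [if_neg (by simpa using Nat.not_even_iff_odd.mpr hodd)] at this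
            · intro x hx
              have : x = v := by rw [hlh] at hx; exact (Option.some.injEq _ _ ▸ hx).symm
              subst this
              exact hv
          · exact Hup l₀ hl₀
        · intro l₁ h₁ l₂ h₂ hne u hu₁
          rcases Finset.mem_insert.mp h₁ with heq₁ | h₁' <;>
            rcases Finset.mem_insert.mp h₂ with heq₂ | h₂'
          · exact absurd (heq₁.trans heq₂.symm) hne
          · exact fun hu₂ => H2 l₂ h₂' u hu₂ (heq₁ ▸ hu₁)
          · exact fun hu₂ => H2 l₁ h₁' u hu₁ (heq₂ ▸ hu₂)
          · exact hP'disj l₁ h₁' l₂ h₂' hne u hu₁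
      · -- non-augmenting case: P' itself works
        refine ⟨P', ?_, Hup, hP'disj⟩
        obtain ⟨k, hk⟩ := heven
        omega

end Outer

lemma altList_head_not {V : Type*} {M : Set (Sym2 V)} {L : List (Sym2 V)} {e : Sym2 V}
    (h : AltList M false L) (he : L.head? = some e) : e ∉ M := by
  cases L with
  | nil => simp at he
  | cons f L =>
      have : f = e := by simpa using he
      subst this
      intro hmem
      simpa using h.1.mp hmem


/-- If `|M*| > |M|`, the symmetric difference `M Δ M*` contains at least
`|M*| - |M|` pairwise vertex-disjoint augmenting paths w.r.t. `M`. -/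
theorem stmt11 {V : Type*} [Fintype V] [DecidableEq V] (G : SimpleGraph V)
    (M Mstar : Finset (Sym2 V)) (hM : IsMatchingF G M) (hMstar : IsMatchingF G Mstar)
    (hlt : M.card < Mstar.card) :
    ∃ P : Finset (List V),
      Mstar.card - M.card ≤ P.card ∧
      (∀ l ∈ P, IsAugPathL G (↑M) l ∧ ∀ e ∈ edgesOf l, e ∈ symmDiff M Mstar) ∧
      (∀ l ∈ P, ∀ l' ∈ P, l ≠ l' → ∀ v : V, v ∈ l → v ∉ l') := by
  obtain ⟨hMG, hMpw⟩ := hM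
  obtain ⟨hMsG, hMspw⟩ := hMstar
  set A := M \ Mstar with hAdef
  set B := Mstar \ M with hBdef
  have hAsub : A ⊆ M := Finset.sdiff_subset
  have hBsub : B ⊆ Mstar := Finset.sdiff_subset
  have hApw : PW A := fun e he f hf => hMpw e (hAsub he) f (hAsub hf)
  have hBpw : PW B := fun e he f hf => hMspw e (hBsub he) f (hBsub hf)
  have hAG : (↑A : Set (Sym2 V)) ⊆ G.edgeSet := fun e he => hMG (hAsub he)
  have hBG : (↑B : Set (Sym2 V)) ⊆ G.edgeSet := fun e he => hMsG (hBsub he)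
  have hdisj : Disjoint A B := disjoint_sdiff_sdiff
  obtain ⟨P, hPcard, hPprop, hPdisj⟩ :=
    berge_aux G B.card A B le_rfl hApw hBpw hAG hBG hdisj
  refine ⟨P, ?_, ?_, hPdisj⟩
  · have c1 : A.card + (M ∩ Mstar).card = M.card := Finset.card_sdiff_add_card_inter M Mstar
    have c2 : B.card + (Mstar ∩ M).card = Mstar.card := Finset.card_sdiff_add_card_inter Mstar M
    rw [Finset.inter_comm] at c2
    omega
  · intro l hl
    obtain ⟨hlen, hnd, hch, halt, haltr, hhead, hlast, hmem⟩ := hPprop l hl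
    have hAM : ∀ e ∈ edgesOf l, (e ∈ (↑A : Set (Sym2 V)) ↔ e ∈ (↑M : Set (Sym2 V))) := by
      intro e hee
      simp only [Finset.mem_coe]
      constructor
      · exact fun h => hAsub h
      · intro heM
        rcases Finset.mem_union.mp (hmem e hee) with h | h
        · exact h
        · rw [hBdef] at h
          exact absurd heM (Finset.mem_sdiff.mp h).2
    have hendB : ∀ (x : V) (e : Sym2 V), e ∈ B → x ∈ e → Unmatched (↑A) x →
        Unmatched (↑M) x := by
      intro x e heB hxe hxA g hg hxg
      have hgM : g ∈ M := by exact_mod_cast hg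
      by_cases hgs : g ∈ Mstar
      · rw [hBdef] at heB
        have heMs : e ∈ Mstar := (Finset.mem_sdiff.mp heB).1
        have hne : e ≠ g := fun h => (Finset.mem_sdiff.mp heB).2 (h ▸ hgM)
        exact hMspw e heMs g hgs hne x hxe hxg
      · refine hxA g ?_ hxg
        rw [hAdef]
        exact_mod_cast Finset.mem_sdiff.mpr ⟨hgM, hgs⟩
    refine ⟨⟨hlen, hnd, hch, altList_congr _ _ hAM halt,
      altList_congr _ _ (fun e he => hAM e (List.mem_reverse.mp he)) haltr, ?_, ?_⟩, ?_⟩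
    · -- head unmatched w.r.t. M
      intro x hx
      obtain ⟨a, b, t, rfl⟩ : ∃ a b t, l = a :: b :: t := by
        match l, hlen with
        | a :: b :: t, _ => exact ⟨a, b, t, rfl⟩
      have hxa : x = a := by simpa using hx.symm
      subst hxa
      have hfe : s(x, b) ∈ edgesOf (x :: b :: t) := by rw [edgesOf_cons_cons]; simp
      have hfA : s(x, b) ∉ A := by
        have := altList_head_not halt (by rw [edgesOf_cons_cons]; rfl)
        simpa using this
      have hfB : s(x, b) ∈ B := by
        rcases Finset.mem_union.mp (hmem _ hfe) with h | h
        · exact absurd h hfA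
        · exact h
      exact hendB x s(x, b) hfB (by simp) (hhead x rfl)
    · -- last unmatched w.r.t. M
      intro x hx
      obtain ⟨e, hee, hxe⟩ := last_mem_lastEdge l hlen x hx
      have heel : e ∈ edgesOf l := List.mem_of_getLast? hee
      have heA : e ∉ A := by
        refine altList_head_not haltr ?_
        rw [List.head?_reverse]
        exact hee
      have heB : e ∈ B := by
        rcases Finset.mem_union.mp (hmem e heel) with h | h
        · exact absurd h (by simpa using heA)
        · exact h
      exact hendB x e heB hxe (hlast x hx)
    · -- edges in symmetric difference
      intro e hee
      rw [Finset.mem_symmDiff]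
      rcases Finset.mem_union.mp (hmem e hee) with h | h
      · rw [hAdef] at h
        have := Finset.mem_sdiff.mp h
        exact Or.inl ⟨this.1, this.2⟩
      · rw [hBdef] at h
        have := Finset.mem_sdiff.mp h
        exact Or.inr ⟨this.1, this.2⟩
end

section
/- A blossom (the union of the two tree paths from the endpoints x and y of a bridge edge to their lowest common ancestor b, together with the edge xy) contains an odd number of vertices. -/
open SimpleGraph

/-- A blossom, formed by the two even-length alternating tree paths from the base `b`
(the lowest common ancestor) to the endpoints `x` and `y` of the bridge edge `xy`,
contains an odd number of vertices. -/
theorem stmt13 {V : Type*} [Fintype V] [DecidableEq V] (G : SimpleGraph V)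
    (M : Set (Sym2 V)) (b x y : V)
    (px : G.Walk b x) (py : G.Walk b y)
    (hpx : px.IsPath) (hpy : py.IsPath)
    (hax : AltList M false px.edges) (hay : AltList M false py.edges)
    (hex : Even px.length) (hey : Even py.length)
    (hdisj : ∀ v : V, v ∈ px.support → v ∈ py.support → v = b)
    (hxy : G.Adj x y) (hxyM : s(x, y) ∉ M) :
    Odd (px.support.toFinset ∪ py.support.toFinset).card := by
  have hinter : px.support.toFinset ∩ py.support.toFinset = {b} := by
    ext v
    simp only [Finset.mem_inter, List.mem_toFinset, Finset.mem_singleton]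
    constructor
    · rintro ⟨h1, h2⟩; exact hdisj v h1 h2
    · rintro rfl; exact ⟨px.start_mem_support, py.start_mem_support⟩
  have hcx : px.support.toFinset.card = px.length + 1 := by
    rw [List.toFinset_card_of_nodup hpx.support_nodup, Walk.length_support]
  have hcy : py.support.toFinset.card = py.length + 1 := by
    rw [List.toFinset_card_of_nodup hpy.support_nodup, Walk.length_support]
  have hkey := Finset.card_union_add_card_inter px.support.toFinset py.support.toFinset
  rw [hinter, Finset.card_singleton, hcx, hcy] at hkey
  have : (px.support.toFinset ∪ py.support.toFinset).card = px.length + py.length + 1 := by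
    omega
  rw [this]
  obtain ⟨m, hm⟩ := hex
  obtain ⟨n, hn⟩ := hey
  exact ⟨m + n, by omega⟩
end

section
/- Let B be a blossom with base b (an odd cycle structure alternating with respect to M except at b). For every vertex v of B there exists an even-length alternating path inside B from v to b that starts (if non-trivial) with the matching edge incident to v. -/
open SimpleGraph

lemma altList_iff {V : Type*} (M : Set (Sym2 V)) (l : List (Sym2 V)) : ∀ (s : Bool),
    AltList M s l ↔ ∀ i (h : i < l.length),
      (l[i] ∈ M ↔ (if Even i then s else !s) = true) := by
  induction l with
  | nil => intro s; simp [AltList]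
  | cons e t ih =>
    intro s
    simp only [AltList, ih (!s)]
    constructor
    · rintro ⟨h0, h1⟩ i hi
      match i with
      | 0 => simpa using h0
      | Nat.succ j =>
        have hj' : j < t.length := by simpa using hi
        have := h1 j hj'
        simp only [List.getElem_cons_succ]
        rw [this]
        rcases Nat.even_or_odd j with hj | hj
        · simp [hj, Nat.even_add_one]
        · simp [Nat.not_even_iff_odd.mpr hj, Nat.even_add_one]
    · intro h
      refine ⟨by have h0 := h 0 (by simp); rw [List.getElem_cons_zero] at h0; simpa using h0, fun j hj => ?_⟩
      have := h (j + 1) (by simpa using hj)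
      simp only [List.getElem_cons_succ] at this
      rw [this]
      rcases Nat.even_or_odd j with hj' | hj'
      · simp [hj', Nat.even_add_one]
      · simp [Nat.not_even_iff_odd.mpr hj', Nat.even_add_one]

/-- Let a blossom with base `b` be given as an odd cycle through `b` whose edges
alternate w.r.t. `M` except at `b` (both cycle edges at `b` are non-matching). Then
every vertex `v` of the blossom has an even-length alternating simple path inside the
blossom from `v` to `b` which, if non-trivial, starts with the matching edge
incident to `v`. -/
theorem stmt19 {V : Type*} [Fintype V] [DecidableEq V] (G : SimpleGraph V)
    (M : Set (Sym2 V)) (hM : IsMatching G M) (b : V)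
    (c : G.Walk b b) (hc : c.IsCycle) (hodd : Odd c.length)
    (halt : AltList M false c.edges) (halt' : AltList M false c.edges.reverse) :
    ∀ v ∈ c.support, ∃ p : G.Walk v b,
      p.IsPath ∧ AltList M true p.edges ∧ Even p.edges.length ∧
      ∀ e ∈ p.edges, e ∈ c.edges := by
  intro v hv
  by_cases hvb : v = b
  · subst hvb
    exact ⟨Walk.nil, Walk.IsPath.nil, trivial, by simp, by simp⟩
  -- split the cycle at v
  set q := c.takeUntil v hv with hq
  set r := c.dropUntil v hv with hr
  have hspec : q.append r = c := c.take_spec hv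
  have hedges : c.edges = q.edges ++ r.edges := by
    rw [← hspec, Walk.edges_append]
  have hlen : q.length + r.length = c.length := by
    rw [← hspec, Walk.length_append]
  have hqpos : 0 < q.length := by
    rcases Nat.eq_zero_or_pos q.length with h0 | h0
    · exact absurd (Walk.eq_of_length_eq_zero h0).symm hvb
    · exact h0
  have hql : q.edges.length = q.length := q.length_edges
  have hrl : r.edges.length = r.length := r.length_edges
  have hclen : c.edges.length = c.length := c.length_edges
  -- indexed form of the alternation hypothesis
  have hidx : ∀ j (h : j < c.edges.length), (c.edges[j] ∈ M ↔ ¬ Even j) := by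
    intro j h
    have h2 := (altList_iff M c.edges false).mp halt j h
    rcases Nat.even_or_odd j with hj | hj
    · simp only [if_pos hj] at h2
      simp [h2, hj]
    · have hj' : ¬ Even j := Nat.not_even_iff_odd.mpr hj
      simp only [if_neg hj'] at h2
      simp [h2, hj']
  -- the supports split nicely
  have hsupp : c.support.tail = q.support.tail ++ r.support.tail := by
    have : c.support = q.support ++ r.support.tail := by
      rw [← hspec, Walk.support_append]
    rw [this, q.support_eq_cons]
    simp
  have hnd : c.support.tail.Nodup := hc.support_nodup
  rw [hsupp, List.nodup_append] at hnd
  obtain ⟨hnd1, hnd2, hdisj⟩ := hnd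
  have hvq : v ∈ q.support.tail := by
    have h1 := q.end_mem_support
    rw [q.support_eq_cons] at h1
    rcases List.mem_cons.mp h1 with h | h
    · exact absurd h hvb
    · exact h
  have hbr : b ∈ r.support.tail := by
    have h1 := r.end_mem_support
    rw [r.support_eq_cons] at h1
    rcases List.mem_cons.mp h1 with h | h
    · exact absurd h.symm hvb
    · exact h
  have hqpath : q.IsPath := by
    rw [Walk.isPath_def, q.support_eq_cons]
    refine List.nodup_cons.mpr ⟨fun hb => ?_, hnd1⟩
    exact hdisj b hb b hbr rfl
  have hrpath : r.IsPath := by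
    rw [Walk.isPath_def, r.support_eq_cons]
    exact List.nodup_cons.mpr ⟨fun hvr => hdisj v hvq v hvr rfl, hnd2⟩
  rcases Nat.even_or_odd q.length with hqe | hqo
  · -- even prefix: use the reverse of the takeUntil part
    refine ⟨q.reverse, hqpath.reverse, ?_, ?_, ?_⟩
    · rw [altList_iff]
      intro i hi
      have hi' : i < q.edges.length := by
        simpa [Walk.edges_reverse] using hi
      have e1 : q.reverse.edges[i]'hi = q.edges.reverse[i]'(by simpa using hi') :=
        List.getElem_of_eq (Walk.edges_reverse q) hi
      have hlt : q.edges.length - 1 - i < c.edges.length := by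
        rw [hedges, List.length_append]; omega
      have e2 : q.edges[q.edges.length - 1 - i]'(by omega) =
          c.edges[q.edges.length - 1 - i]'hlt := by
        rw [List.getElem_of_eq hedges hlt,
          List.getElem_append_left (by omega)]
      rw [e1, List.getElem_reverse, e2, hidx _ hlt]
      rcases Nat.even_or_odd i with hie | hio
      · rw [if_pos hie]
        have hpar : ¬ Even (q.edges.length - 1 - i) := by
          rw [Nat.even_iff] at hqe ⊢
          rw [Nat.even_iff] at hie
          omega
        exact iff_of_true hpar rfl
      · have hie : ¬ Even i := Nat.not_even_iff_odd.mpr hio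
        rw [if_neg hie]
        have hpar : Even (q.edges.length - 1 - i) := by
          rw [Nat.even_iff] at hqe ⊢
          rw [Nat.odd_iff] at hio
          omega
        exact iff_of_false (not_not_intro hpar) (by simp)
    · rw [Walk.edges_reverse, List.length_reverse, hql]; exact hqe
    · intro e he
      rw [Walk.edges_reverse, List.mem_reverse] at he
      exact c.edges_takeUntil_subset hv he
  · -- odd prefix: use the dropUntil part
    refine ⟨r, hrpath, ?_, ?_, ?_⟩
    · rw [altList_iff]
      intro i hi
      have hlt : q.edges.length + i < c.edges.length := by
        rw [hedges, List.length_append]; omega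
      have e3 : r.edges[i]'hi = c.edges[q.edges.length + i]'hlt := by
        rw [List.getElem_of_eq hedges hlt,
          List.getElem_append_right (Nat.le_add_right _ _)]
        congr 1
        omega
      rw [e3, hidx _ hlt]
      rcases Nat.even_or_odd i with hie | hio
      · rw [if_pos hie]
        have hpar : ¬ Even (q.edges.length + i) := by
          rw [Nat.even_iff] at hie ⊢
          rw [Nat.odd_iff] at hqo
          omega
        exact iff_of_true hpar rfl
      · have hie : ¬ Even i := Nat.not_even_iff_odd.mpr hio
        rw [if_neg hie]
        have hpar : Even (q.edges.length + i) := by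
          rw [Nat.even_iff]
          rw [Nat.odd_iff] at hqo hio
          omega
        exact iff_of_false (not_not_intro hpar) (by simp)
    · rw [hrl, Nat.even_iff]
      rcases hodd with ⟨k, hk⟩
      rw [Nat.odd_iff] at hqo
      omega
    · intro e he
      exact c.edges_dropUntil_subset hv he
end
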